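/- arXiv:2106.01356 — 4 statements merged into one kernel-verified Lean document; each statement's English description precedes it below -/
import Mathlib

section
/- Fix a real number b and an integer n ≥ 2. Define f(r) = (r(1 + b rⁿ))² for r > 0, and define K(r) = f(r)^{-1} ( −(1/2) f''(r) + (1/4) f'(r)² f(r)^{-1} ). Then K(r) + n(n+1) b r^{n−2} = O(r^{n−1}) as r → 0⁺; equivalently, K(r) = −n(n+1) b r^{n−2} + O(r^{n−1}). -/
/-!
Write `f = g²` with `g r = r + b rⁿ⁺¹`. Then `f'' = 2g'² + 2gg''` and `f'² = 4g²g'²`, so the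
`g'²` terms cancel and `K = -g''/g = -n(n+1) b rⁿ⁻² / (1 + b rⁿ)`. Hence
`K + n(n+1) b rⁿ⁻² = rⁿ⁻¹ · n(n+1) b² rⁿ⁻¹ / (1 + b rⁿ)`, and the second factor is continuous,
hence bounded, at `0`.
-/

open Filter Asymptotics
open scoped Topology

noncomputable def radialJacobiTrace (f : ℝ → ℝ) (r : ℝ) : ℝ :=
  (f r)⁻¹ * (-(1 / 2) * deriv (deriv f) r + (1 / 4) * (deriv f r) ^ 2 * (f r)⁻¹)

theorem radialJacobiTrace_sq {g : ℝ → ℝ} (hg : Differentiable ℝ g) {r : ℝ}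
    (hg' : DifferentiableAt ℝ (deriv g) r) (hr : g r ≠ 0) :
    radialJacobiTrace (fun x => g x ^ 2) r = -deriv (deriv g) r / g r := by
  have hdf : deriv (fun x => g x ^ 2) = fun x => 2 * g x * deriv g x := by
    funext x
    simp [hg x]
  have hddf : deriv (deriv fun x => g x ^ 2) r
      = 2 * (deriv g r * deriv g r + g r * deriv (deriv g) r) := by
    rw [hdf, (((hg r).hasDerivAt.const_mul 2).fun_mul hg'.hasDerivAt).deriv]
    ring
  rw [radialJacobiTrace, hddf, hdf]
  field_simp
  ring

theorem deriv_id_add_const_mul_pow (b : ℝ) (n : ℕ) :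
    deriv (fun x : ℝ => x + b * x ^ (n + 1)) = fun x => 1 + b * ((n + 1) * x ^ n) := by
  funext x
  simpa using ((hasDerivAt_id' x).fun_add ((hasDerivAt_pow (n + 1) x).const_mul b)).deriv

theorem radialJacobiTrace_sq_id_add_const_mul_pow (b : ℝ) (n : ℕ) {r : ℝ}
    (hr : r + b * r ^ (n + 1) ≠ 0) :
    radialJacobiTrace (fun x => (x + b * x ^ (n + 1)) ^ 2) r
      = -(b * (n + 1) * n * r ^ (n - 1)) / (r + b * r ^ (n + 1)) := by
  have hg' := deriv_id_add_const_mul_pow b n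
  rw [radialJacobiTrace_sq (g := fun x => x + b * x ^ (n + 1)) (by fun_prop)
      (by rw [hg']; fun_prop) hr, hg',
    ((((hasDerivAt_pow n r).const_mul (n + 1 : ℝ)).const_mul b).const_add 1).deriv]
  ring

theorem radialJacobiTrace_sq_mul_one_add_const_mul_pow (b : ℝ) (m : ℕ) {r : ℝ} (hr : r ≠ 0)
    (hu : 1 + b * r ^ (m + 2) ≠ 0) :
    radialJacobiTrace (fun x => (x * (1 + b * x ^ (m + 2))) ^ 2) r + (m + 2) * (m + 3) * b * r ^ m
      = r ^ (m + 1) * ((m + 2) * (m + 3) * b ^ 2 * r ^ (m + 1) / (1 + b * r ^ (m + 2))) := by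
  have hg : ∀ x : ℝ, x * (1 + b * x ^ (m + 2)) = x + b * x ^ (m + 2 + 1) := fun x => by ring
  simp only [hg]
  rw [radialJacobiTrace_sq_id_add_const_mul_pow b _ (by rw [← hg]; exact mul_ne_zero hr hu), ← hg]
  push_cast
  field_simp
  ring

/-- Leading term analysis: for `f(r) = (r(1 + b rⁿ))²` and
`K(r) = f(r)⁻¹(−½ f''(r) + ¼ f'(r)² f(r)⁻¹)` one has
`K(r) = −n(n+1) b r^{n−2} + O(r^{n−1})` as `r → 0⁺`. -/
theorem stmt7 (b : ℝ) (n : ℕ) (hn : 2 ≤ n)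
    (f K : ℝ → ℝ)
    (hf : ∀ r, f r = (r * (1 + b * r ^ n)) ^ 2)
    (hK : ∀ r, K r = (f r)⁻¹ *
        (-(1 / 2) * deriv (deriv f) r + (1 / 4) * (deriv f r) ^ 2 * (f r)⁻¹)) :
    (fun r => K r + (n * (n + 1) : ℝ) * b * r ^ (n - 2)) =O[𝓝[>] (0 : ℝ)]
      fun r => r ^ (n - 1) := by
  obtain ⟨m, rfl⟩ : ∃ m, n = m + 2 := ⟨n - 2, by omega⟩
  rw [Nat.add_sub_cancel, Nat.add_succ_sub_one]
  obtain rfl : K = radialJacobiTrace f := funext hK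
  obtain rfl : f = fun x => (x * (1 + b * x ^ (m + 2))) ^ 2 := funext hf
  set φ : ℝ → ℝ := fun r => (m + 2) * (m + 3) * b ^ 2 * r ^ (m + 1) / (1 + b * r ^ (m + 2))
  have hφ : ContinuousAt φ 0 :=
    (continuousAt_id.pow _).const_mul _ |>.div (by fun_prop) (by simp)
  have hO : (fun r => r ^ (m + 1) * φ r) =O[𝓝[>] 0] fun r => r ^ (m + 1) := by
    simpa using ((isBigO_refl (fun r : ℝ => r ^ (m + 1)) _).mul
      (hφ.tendsto.isBigO_one ℝ)).mono nhdsWithin_le_nhds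
  have hu : ∀ᶠ r in 𝓝 (0 : ℝ), 1 + b * r ^ (m + 2) ≠ 0 :=
    (by fun_prop : ContinuousAt (fun r : ℝ => 1 + b * r ^ (m + 2)) 0).eventually_ne (by simp)
  refine hO.congr' ?_ EventuallyEq.rfl
  filter_upwards [self_mem_nhdsWithin, nhdsWithin_le_nhds hu] with r hr hu
  convert (radialJacobiTrace_sq_mul_one_add_const_mul_pow b m hr.ne' hu).symm using 2
  push_cast
  ring
end

section
/- Let m ≥ 4 be an even integer and define ψ(u) = ( sin(π/2 − u) / (π/2 − u) ) · cos(π/2 − u)^{1/(m−1)} for u ∈ (0, π/2). Then the function u ↦ 1/ψ(u) is integrable on the interval (0, π/2); in particular the radial curves in the conformally deformed metric have finite length and the deformed manifold is not geodesically complete. -/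
open Real

/-- For even `m ≥ 4` and `ψ(u) = (sin(π/2−u)/(π/2−u)) · cos(π/2−u)^{1/(m−1)}`,
the function `1/ψ` is integrable on `(0, π/2)`; hence the radial curves of the
conformally deformed metric have finite length and the deformed manifold is
not geodesically complete. -/
theorem stmt9 (m : ℕ) (hm : 4 ≤ m) (hme : Even m)
    (ψ : ℝ → ℝ)
    (hψ : ∀ u, ψ u = (Real.sin (π / 2 - u) / (π / 2 - u)) *
        Real.cos (π / 2 - u) ^ ((1 : ℝ) / ((m : ℝ) - 1))) :
    MeasureTheory.IntegrableOn (fun u => 1 / ψ u) (Set.Ioo 0 (π / 2)) := by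
  have hπ : (0:ℝ) < π := Real.pi_pos
  set p : ℝ := (1 : ℝ) / ((m : ℝ) - 1) with hp
  have hm3 : (3:ℝ) ≤ (m:ℝ) - 1 := by
    have : (4:ℝ) ≤ (m:ℝ) := by exact_mod_cast hm
    linarith
  have hp0 : 0 < p := by positivity
  have hp1 : p < 1 := by
    rw [hp, div_lt_one (by linarith)]; linarith
  -- the dominating function
  have hg : MeasureTheory.IntegrableOn
      (fun u : ℝ => (π/2) * (π/2) ^ p * u ^ (-p)) (Set.Ioo 0 (π / 2)) := by
    have h1 : IntervalIntegrable (fun u : ℝ => u ^ (-p)) MeasureTheory.volume 0 (π/2) :=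
      intervalIntegral.intervalIntegrable_rpow' (by linarith)
    exact ((h1.1.mono_set Set.Ioo_subset_Ioc_self).const_mul _)
  refine hg.mono' ?_ ?_
  · -- a.e. strong measurability
    apply MeasureTheory.AEStronglyMeasurable.restrict
    have : Measurable fun u : ℝ => 1 / ψ u := by
      simp only [hψ]
      fun_prop
    exact this.aestronglyMeasurable
  · filter_upwards [MeasureTheory.ae_restrict_mem measurableSet_Ioo] with u hu
    obtain ⟨hu0, hu2⟩ := hu
    have hv0 : 0 < π/2 - u := by linarith
    have hvlt : π/2 - u < π/2 := by linarith
    have hsin : 0 < Real.sin (π/2 - u) := Real.sin_pos_of_pos_of_lt_pi hv0 (by linarith)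
    have hcos : 0 < Real.cos (π/2 - u) := Real.cos_pos_of_mem_Ioo ⟨by linarith, hvlt⟩
    have hψu : 0 < ψ u := by
      rw [hψ u]
      positivity
    rw [Real.norm_eq_abs, abs_of_pos (by positivity)]
    -- 1/ψ u = ((π/2-u)/sin(π/2-u)) * cos(π/2-u)^(-p)
    have hrw : 1 / ψ u = ((π/2 - u) / Real.sin (π/2 - u)) * Real.cos (π/2 - u) ^ (-p) := by
      rw [hψ u, Real.rpow_neg hcos.le, one_div, mul_inv, inv_div]
    rw [hrw]
    have hb1 : (π/2 - u) / Real.sin (π/2 - u) ≤ π/2 := by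
      rw [div_le_iff₀ hsin]
      have := Real.mul_le_sin (x := π/2 - u) hv0.le (by linarith)
      calc π/2 - u = (π/2) * (2/π * (π/2 - u)) := by field_simp
        _ ≤ π/2 * Real.sin (π/2 - u) := by
            apply mul_le_mul_of_nonneg_left this (by linarith)
    have hb2 : Real.cos (π/2 - u) ^ (-p) ≤ (π/2) ^ p * u ^ (-p) := by
      have hcos_eq : Real.cos (π/2 - u) = Real.sin u := by
        rw [Real.cos_pi_div_two_sub]
      have hsinu : 2/π * u ≤ Real.sin u := Real.mul_le_sin hu0.le hu2.le
      have h2piu : 0 < 2/π * u := by positivity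
      have := Real.rpow_le_rpow_of_nonpos h2piu (hcos_eq ▸ hsinu) (neg_nonpos.mpr hp0.le)
      refine this.trans_eq ?_
      rw [Real.mul_rpow (by positivity) hu0.le]
      congr 1
      rw [Real.rpow_neg (by positivity), ← Real.inv_rpow (by positivity), inv_div]
    calc (π/2 - u) / Real.sin (π/2 - u) * Real.cos (π/2 - u) ^ (-p)
        ≤ (π/2) * ((π/2) ^ p * u ^ (-p)) := by
          apply mul_le_mul hb1 hb2 (by positivity) (by positivity)
      _ = (π/2) * (π/2) ^ p * u ^ (-p) := by ring
end

section
/- Let ψ(u) = ( sin(π/2 − u) / (π/2 − u) ) · cos(π/2 − u)^{1/5} and Θ(u) = sin(π/2 − u)⁵ cos(π/2 − u) for u ∈ (0, π/2), and define F(u) = 4 ψ(u) ψ''(u) + ψ(u) Θ(u)^{-1} (Θψ)'(u) − 5 ψ'(u)². Then F(u) + (84/(25π²)) u^{−8/5} = O(u^{−3/5}) as u → 0⁺; equivalently F(u) = −(84/(25π²)) u^{−8/5} + O(u^{−3/5}). -/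
/-!
Write `ψ(u) = g(u) · sin(u)^p` with `p = 1/5` and `g(u) = cos u / (π/2 − u)`, smooth near `0`,
and `Θ(u) = cos(u)^5 sin u`. Differentiating gives `F = sin^(−8/5) · N`, where `N` is built
from `g, g', g''` and trigonometric functions and is regular at `0`. Only the `1/sin²` parts
of `4ψψ''` and `−5ψ'²` survive at `u = 0`, with coefficient `4p(p − 1) − 5p² = −21/25`, so
`N(0) = −(21/25) g(0)² = −84/(25π²) =: −c` and `N + c = O(u)`. Finally `sin u = u · sinc u`:
`F + c u^(−8/5) = u^(−8/5) (sinc^(−8/5) (N + c) − c (sinc^(−8/5) − 1))`, and the bracket is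
`O(u)` because `sinc − 1 = O(u²)`.
-/

open Real Filter Asymptotics Set
open scoped Topology

namespace FubiniStudyCP3

theorem sinc_sub_one_isBigO : (fun x => sinc x - 1) =O[𝓝 0] fun x => x ^ 2 := by
  refine IsBigO.of_bound (1 / 6) (Eventually.of_forall fun x => ?_)
  rcases eq_or_ne x 0 with rfl | hx
  · simp
  rw [sinc_of_ne_zero hx, div_sub_one hx, norm_div, Real.norm_eq_abs, Real.norm_eq_abs,
    abs_sub_comm, div_le_iff₀ (abs_pos.2 hx), norm_pow, Real.norm_eq_abs]
  exact (abs_sub_sin_le x).trans_eq (by ring)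

theorem rpow_sinc_sub_one_isBigO (p : ℝ) : (fun x => sinc x ^ p - 1) =O[𝓝 0] fun x => x := by
  have hpow : (fun y : ℝ => y ^ p - 1) =O[𝓝 1] fun y => y - 1 := by
    simpa using (differentiableAt_id.rpow_const (p := p) (Or.inl one_ne_zero)).isBigO_sub
  have hsinc : Tendsto sinc (𝓝 0) (𝓝 1) := sinc_zero ▸ continuous_sinc.tendsto 0
  exact (hpow.comp_tendsto hsinc).trans
    (sinc_sub_one_isBigO.trans (isLittleO_pow_id one_lt_two).isBigO)

theorem sin_pos_of_mem_Ioo_pi_div_two {u : ℝ} (hu : u ∈ Ioo 0 (π / 2)) : 0 < sin u :=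
  sin_pos_of_mem_Ioo (Ioo_subset_Ioo_right (half_le_self pi_pos.le) hu)

theorem isBigO_rpow_mul {E : ℝ → ℝ} (a : ℝ) (hE : E =O[𝓝 0] fun u => u) :
    (fun u => u ^ a * E u) =O[𝓝[>] 0] fun u => u ^ (a + 1) := by
  refine ((isBigO_refl (fun u : ℝ => u ^ a) _).mul (hE.mono nhdsWithin_le_nhds)).congr'
    EventuallyEq.rfl ?_
  filter_upwards [self_mem_nhdsWithin] with u hu
  rw [rpow_add_one (ne_of_gt hu)]

theorem hasDerivAt_mul_sin_rpow {h : ℝ → ℝ} {h' u : ℝ} (p : ℝ) (hh : HasDerivAt h h' u)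
    (hu : sin u ≠ 0) :
    HasDerivAt (fun t => h t * sin t ^ p)
      (h' * sin u ^ p + h u * p * cos u * sin u ^ (p - 1)) u :=
  (hh.mul ((hasDerivAt_sin u).rpow_const (p := p) (Or.inl hu))).congr_deriv (by ring)

noncomputable def radialRicciTerm (ψ Θ : ℝ → ℝ) (u : ℝ) : ℝ :=
  4 * ψ u * deriv (deriv ψ) u + ψ u * (Θ u)⁻¹ * deriv (fun t => Θ t * ψ t) u
    - 5 * deriv ψ u ^ 2

noncomputable def radialRicciNumerator (g : ℝ → ℝ) (u : ℝ) : ℝ :=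
  sin u * (sin u * (4 * g u * deriv (deriv g) u - 4 / 5 * g u ^ 2 - 5 * deriv g u ^ 2
      + g u * deriv g u - 5 * g u ^ 2 * sin u / cos u)
    + cos u * (6 / 5 * g u ^ 2 - 2 / 5 * g u * deriv g u))
  - 21 / 25 * g u ^ 2 * cos u ^ 2

variable {g : ℝ → ℝ}

theorem radialRicciTerm_eq (hg : ContDiffOn ℝ 2 g (Ioo 0 (π / 2))) {u : ℝ}
    (hu : u ∈ Ioo 0 (π / 2)) :
    radialRicciTerm (fun t => g t * sin t ^ (1 / 5 : ℝ)) (fun t => cos t ^ 5 * sin t) u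
      = sin u ^ (-(8 : ℝ) / 5) * radialRicciNumerator g u := by
  have hsin (t : ℝ) (ht : t ∈ Ioo 0 (π / 2)) : sin t ≠ 0 :=
    (sin_pos_of_mem_Ioo_pi_div_two ht).ne'
  have hg' (t : ℝ) (ht : t ∈ Ioo 0 (π / 2)) : HasDerivAt g (deriv g t) t :=
    ((hg.differentiableOn two_ne_zero t ht).differentiableAt
      (isOpen_Ioo.mem_nhds ht)).hasDerivAt
  have hg'' : HasDerivAt (deriv g) (deriv (deriv g) u) u :=
    (((hg.deriv_of_isOpen isOpen_Ioo (m := 1) (by norm_num)).differentiableOn one_ne_zero u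
      hu).differentiableAt (isOpen_Ioo.mem_nhds hu)).hasDerivAt
  set p : ℝ := 1 / 5
  have hψ' : deriv (fun t => g t * sin t ^ p)
      =ᶠ[𝓝 u] fun t => deriv g t * sin t ^ p + g t * p * cos t * sin t ^ (p - 1) :=
    eventually_of_mem (isOpen_Ioo.mem_nhds hu) fun t ht =>
      (hasDerivAt_mul_sin_rpow p (hg' t ht) (hsin t ht)).deriv
  have hψ'' := ((hasDerivAt_mul_sin_rpow p hg'' (hsin u hu)).add
    (hasDerivAt_mul_sin_rpow (p - 1) (((hg' u hu).mul_const p).mul (hasDerivAt_cos u))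
      (hsin u hu))).congr_of_eventuallyEq hψ'
  have hΘ : HasDerivAt (fun t => cos t ^ 5 * sin t)
      (cos u ^ 6 - 5 * cos u ^ 4 * sin u ^ 2) u :=
    (((hasDerivAt_cos u).pow 5).mul (hasDerivAt_sin u)).congr_deriv (by simp; ring)
  have hΘψ : HasDerivAt (fun t => cos t ^ 5 * sin t * (g t * sin t ^ p)) _ u :=
    hΘ.mul (hasDerivAt_mul_sin_rpow p (hg' u hu) (hsin u hu))
  rw [radialRicciTerm, hψ''.deriv, hΘψ.deriv, hψ'.eq_of_nhds]
  have hs : 0 < sin u := sin_pos_of_mem_Ioo_pi_div_two hu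
  have hc : cos u ≠ 0 := (cos_pos_of_mem_Ioo ⟨by linarith [hu.1, pi_pos], hu.2⟩).ne'
  have e1 : sin u ^ (p - 1) = sin u ^ p / sin u := by rw [rpow_sub hs, rpow_one]
  have e2 : sin u ^ (p - 1 - 1) = sin u ^ p / sin u ^ 2 := by
    rw [rpow_sub hs, e1, rpow_one]; ring
  have e3 : sin u ^ (-(8 : ℝ) / 5) = (sin u ^ p) ^ 2 / sin u ^ 2 := by
    rw [← rpow_natCast, ← rpow_mul hs.le, ← rpow_natCast _ 2, ← rpow_sub hs]; norm_num [p]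
  rw [e1, e2, e3, radialRicciNumerator, Pi.mul_apply]
  field_simp
  ring

theorem radialRicciNumerator_add_isBigO {s : Set ℝ} (hg : ContDiffOn ℝ 2 g s)
    (hs : IsOpen s) (h0 : 0 ∈ s) :
    (fun u => radialRicciNumerator g u + 21 / 25 * g 0 ^ 2) =O[𝓝 0] fun u => u := by
  have hg₀ : DifferentiableAt ℝ g 0 :=
    (hg.contDiffAt (hs.mem_nhds h0)).differentiableAt two_ne_zero
  have hg₀' : ContinuousAt g 0 := hg₀.continuousAt
  have hg₁ : ContinuousAt (deriv g) 0 :=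
    (hg.continuousOn_deriv_of_isOpen hs one_le_two).continuousAt (hs.mem_nhds h0)
  have hg₂ : ContinuousAt (deriv (deriv g)) 0 :=
    ((hg.deriv_of_isOpen hs (m := 1) (by norm_num)).continuousOn_deriv_of_isOpen hs
      le_rfl).continuousAt (hs.mem_nhds h0)
  set R : ℝ → ℝ := fun u => -(21 / 25) * g u ^ 2 * cos u ^ 2
  set B : ℝ → ℝ := fun u => sin u * (4 * g u * deriv (deriv g) u - 4 / 5 * g u ^ 2
      - 5 * deriv g u ^ 2 + g u * deriv g u - 5 * g u ^ 2 * sin u / cos u)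
    + cos u * (6 / 5 * g u ^ 2 - 2 / 5 * g u * deriv g u)
  have hB : ContinuousAt B 0 := by fun_prop (disch := simp)
  have hR : DifferentiableAt ℝ R 0 := by fun_prop
  have hsplit : (fun u => radialRicciNumerator g u + 21 / 25 * g 0 ^ 2)
      = fun u => sin u * B u + (R u - R 0) := by
    funext u; simp only [radialRicciNumerator, R, B, cos_zero]; ring
  rw [hsplit]
  refine IsBigO.add ?_ (by simpa using hR.isBigO_sub)
  simpa using isEquivalent_sin.isBigO.mul (hB.isBigO_one ℝ)

end FubiniStudyCP3

open FubiniStudyCP3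

/-- For `m = 6`: with `ψ(u) = (sin(π/2−u)/(π/2−u)) · cos(π/2−u)^{1/5}`,
`Θ(u) = sin(π/2−u)^5 cos(π/2−u)` and
`F(u) = 4 ψψ'' + ψΘ⁻¹(Θψ)' − 5 (ψ')²`, one has
`F(u) = −(84/(25 π²)) u^{−8/5} + O(u^{−3/5})` as `u → 0⁺`. -/
theorem stmt12 (ψ Θ F : ℝ → ℝ)
    (hψ : ∀ u, ψ u = (Real.sin (π / 2 - u) / (π / 2 - u)) *
        Real.cos (π / 2 - u) ^ ((1 : ℝ) / 5))
    (hΘ : ∀ u, Θ u = Real.sin (π / 2 - u) ^ 5 * Real.cos (π / 2 - u))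
    (hF : ∀ u, F u = 4 * ψ u * deriv (deriv ψ) u
        + ψ u * (Θ u)⁻¹ * deriv (fun t => Θ t * ψ t) u
        - 5 * (deriv ψ u) ^ 2) :
    (fun u => F u + (84 / (25 * π ^ 2)) * u ^ (-(8 : ℝ) / 5)) =O[𝓝[>] (0 : ℝ)]
      fun u => u ^ (-(3 : ℝ) / 5) := by
  set g : ℝ → ℝ := fun u => cos u / (π / 2 - u)
  set c : ℝ := 84 / (25 * π ^ 2)
  have hψg : ψ = fun u => g u * sin u ^ ((1 : ℝ) / 5) := funext fun u => by
    rw [hψ, sin_pi_div_two_sub, cos_pi_div_two_sub]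
  have hΘ' : Θ = fun u => cos u ^ 5 * sin u := funext fun u => by
    rw [hΘ, sin_pi_div_two_sub, cos_pi_div_two_sub]
  have hg : ContDiffOn ℝ 2 g (Iio (π / 2)) :=
    contDiff_cos.contDiffOn.div (contDiffOn_const.sub contDiffOn_id) fun u hu =>
      (sub_pos.2 hu).ne'
  have hc : 21 / 25 * g 0 ^ 2 = c := by
    simp only [g, c, cos_zero, sub_zero]; field_simp; ring
  have hN := hc ▸ radialRicciNumerator_add_isBigO hg isOpen_Iio pi_div_two_pos
  have hsinc : (fun u => sinc u ^ (-(8 : ℝ) / 5)) =O[𝓝 0] fun _ => (1 : ℝ) :=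
    (continuous_sinc.continuousAt.rpow_const (Or.inl (by simp))).isBigO_one ℝ
  have hE : (fun u => sinc u ^ (-(8 : ℝ) / 5) * (radialRicciNumerator g u + c)
      - c * (sinc u ^ (-(8 : ℝ) / 5) - 1)) =O[𝓝 0] fun u => u :=
    ((hsinc.mul hN).congr_right fun u => one_mul u).sub
      ((rpow_sinc_sub_one_isBigO _).const_mul_left c)
  refine (isBigO_rpow_mul (-(8 : ℝ) / 5) hE).congr' ?_ (by norm_num)
  filter_upwards [Ioo_mem_nhdsGT pi_div_two_pos] with u hu
  have hsinc_pos : 0 < sinc u := by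
    rw [sinc_of_ne_zero hu.1.ne']
    exact div_pos (sin_pos_of_mem_Ioo_pi_div_two hu) hu.1
  rw [show F = radialRicciTerm ψ Θ from funext hF, hψg, hΘ',
    radialRicciTerm_eq (hg.mono Ioo_subset_Iio_self) hu, ← mul_div_cancel₀ (sin u) hu.1.ne',
    ← sinc_of_ne_zero hu.1.ne', mul_rpow hu.1.le hsinc_pos.le]
  ring
end

section
/- Let ψ(u) = ( sin(π/2 − u) / (π/2 − u) ) · cos(π/2 − u)^{1/7} and Θ(u) = sin(π/2 − u)⁷ cos(π/2 − u) for u ∈ (0, π/2), and define F(u) = 6 ψ(u) ψ''(u) + ψ(u) Θ(u)^{-1} (Θψ)'(u) − 7 ψ'(u)². Then F(u) + (172/(49π²)) u^{−12/7} = O(u^{−5/7}) as u → 0⁺; equivalently F(u) = −(172/(49π²)) u^{−12/7} + O(u^{−5/7}). -/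
/-!
Put `g u = cos u / (π/2 - u)`, so that `ψ = g · sin^{1/7}` and `Θ = cos⁷ · sin`. Differentiating,
with `t = sin^{1/7}`, `t' = cos / (7 t⁶)` and `t⁷ = sin`, gives
`F = A · sin^{2/7} + B · sin^{-5/7} - (43/49) (g cos)² · sin^{-12/7}`, where the coefficients
`A`, `B` only involve `g`, `g'`, `g''`, `cos` and `tan`, hence are bounded near `0`.
Writing `sin u = sinc u · u` with `sinc u = 1 + O(u)`, the first two terms are `O(u^{-5/7})`,
and the last one is `-(43/49) g(0)² u^{-12/7} + O(u^{-5/7})` because `(g cos)² sinc^{-12/7}`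
differs from its value `g(0)² = 4/π²` at `0` by `O(u)`.
-/

open Real Filter Asymptotics Set
open scoped Topology

theorem HasDerivAt.rpow_one_div_natCast {f : ℝ → ℝ} {f' x : ℝ} {n : ℕ} (hf : HasDerivAt f f' x)
    (hx : 0 < f x) (hn : n ≠ 0) :
    HasDerivAt (fun y => f y ^ ((1 : ℝ) / n)) (f' / (n * (f x ^ ((1 : ℝ) / n)) ^ (n - 1))) x := by
  convert hf.rpow_const (p := 1 / n) (Or.inl hx.ne') using 1
  rw [rpow_sub hx, rpow_one]
  have hpow : (f x ^ ((1 : ℝ) / n)) ^ (n - 1) * f x ^ ((1 : ℝ) / n) = f x := by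
    rw [pow_sub_one_mul hn, one_div, rpow_inv_natCast_pow hx.le hn]
  have hτ : 0 < f x ^ ((1 : ℝ) / n) := rpow_pos_of_pos hx _
  set τ := f x ^ ((1 : ℝ) / n)
  rw [← hpow]
  field_simp

theorem hasDerivAt_sin_rpow_one_div_seven {x : ℝ} (hx : 0 < sin x) :
    HasDerivAt (fun y => sin y ^ ((1 : ℝ) / 7)) (cos x / (7 * (sin x ^ ((1 : ℝ) / 7)) ^ 6)) x := by
  simpa using (hasDerivAt_sin x).rpow_one_div_natCast hx (n := 7) (by norm_num)

theorem rpow_intCast_div {x : ℝ} (hx : 0 ≤ x) (k : ℤ) (y : ℝ) :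
    x ^ ((k : ℝ) / y) = (x ^ (1 / y)) ^ k := by
  rw [← rpow_intCast, ← rpow_mul hx]
  ring_nf

theorem ContDiffOn.hasDerivAt_deriv_of_isOpen {g : ℝ → ℝ} {U : Set ℝ} {n : WithTop ℕ∞}
    (hg : ContDiffOn ℝ n g U) (hU : IsOpen U) (hn : n ≠ 0) {x : ℝ} (hx : x ∈ U) :
    HasDerivAt g (deriv g x) x :=
  ((hg.differentiableOn hn).differentiableAt (hU.mem_nhds hx)).hasDerivAt

theorem isBigO_sinc_sub_one_nhdsGT_zero : (fun u => sinc u - 1) =O[𝓝[>] 0] fun u => u := by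
  refine IsBigO.of_bound 1 ?_
  filter_upwards [Ioo_mem_nhdsGT one_pos] with u ⟨hu0, hu1⟩
  have hlow := sin_gt_sub_cube hu0
  have hup := sin_lt hu0
  rw [sinc_of_ne_zero hu0.ne', norm_of_nonneg hu0.le, one_mul, norm_eq_abs, abs_le,
    le_sub_iff_add_le, sub_le_iff_le_add, div_le_iff₀ hu0, le_div_iff₀ hu0]
  constructor <;> nlinarith [pow_pos hu0 3, pow_le_one₀ hu0.le hu1.le (n := 2)]

theorem isBigO_sinc_rpow_sub_one_nhdsGT_zero (a : ℝ) :
    (fun u => sinc u ^ a - 1) =O[𝓝[>] 0] fun u => u := by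
  have hφ : (fun y : ℝ => y ^ a - 1) =O[𝓝 1] fun y => y - 1 := by
    simpa using ((hasDerivAt_id (1 : ℝ)).rpow_const (p := a) (Or.inl one_ne_zero)).isBigO_sub
  have hsinc : Tendsto sinc (𝓝[>] 0) (𝓝 1) :=
    sinc_zero ▸ continuous_sinc.continuousAt.tendsto.mono_left nhdsWithin_le_nhds
  exact (hφ.comp_tendsto hsinc).trans isBigO_sinc_sub_one_nhdsGT_zero

theorem isBigO_sinc_rpow_one_nhdsGT_zero (a : ℝ) :
    (fun u => sinc u ^ a) =O[𝓝[>] 0] fun _ => (1 : ℝ) :=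
  (continuous_sinc.continuousAt.rpow_const (Or.inl (by simp))).tendsto.isBigO_one ℝ
    |>.mono nhdsWithin_le_nhds

theorem DifferentiableAt.isBigO_mul_sinc_rpow_sub {h : ℝ → ℝ} (hd : DifferentiableAt ℝ h 0)
    (a : ℝ) : (fun u => h u * sinc u ^ a - h 0) =O[𝓝[>] 0] fun u => u := by
  have hh : (fun u => h u - h 0) =O[𝓝[>] 0] fun u => u := by
    simpa using hd.isBigO_sub.mono nhdsWithin_le_nhds
  have hprod : (fun u => (h u - h 0) * sinc u ^ a) =O[𝓝[>] 0] fun u => u := by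
    simpa only [mul_one] using hh.mul (isBigO_sinc_rpow_one_nhdsGT_zero a)
  refine (hprod.add ((isBigO_sinc_rpow_sub_one_nhdsGT_zero a).const_mul_left (h 0))).congr_left
    fun u => ?_
  ring

theorem sin_rpow_eq_sinc_rpow_mul_rpow {u : ℝ} (hu : 0 < u) (hs : 0 ≤ sin u) (a : ℝ) :
    sin u ^ a = sinc u ^ a * u ^ a := by
  rw [← mul_rpow (by rw [sinc_of_ne_zero hu.ne']; positivity) hu.le,
    sinc_of_ne_zero hu.ne', div_mul_cancel₀ _ hu.ne']

theorem isBigO_rpow_rpow_nhdsGT_zero_of_le {a b : ℝ} (hab : a ≤ b) :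
    (fun u : ℝ => u ^ b) =O[𝓝[>] 0] fun u => u ^ a := by
  refine IsBigO.of_bound 1 ?_
  filter_upwards [Ioo_mem_nhdsGT one_pos] with u ⟨hu0, hu1⟩
  rw [one_mul, norm_of_nonneg (rpow_nonneg hu0.le _), norm_of_nonneg (rpow_nonneg hu0.le _)]
  exact rpow_le_rpow_of_exponent_ge hu0 hu1.le hab

theorem isBigO_mul_sinc_rpow_mul_rpow_nhdsGT_zero {c : ℝ → ℝ} (hc : ContinuousAt c 0) (a : ℝ)
    {b e : ℝ} (heb : e ≤ b) :
    (fun u => c u * (sinc u ^ a * u ^ b)) =O[𝓝[>] 0] fun u => u ^ e := by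
  simpa only [one_mul] using ((hc.tendsto.isBigO_one ℝ).mono nhdsWithin_le_nhds).mul
    ((isBigO_sinc_rpow_one_nhdsGT_zero a).mul (isBigO_rpow_rpow_nhdsGT_zero_of_le heb))

noncomputable def radialRicci (Θ ψ : ℝ → ℝ) (u : ℝ) : ℝ :=
  6 * ψ u * deriv (deriv ψ) u + ψ u * (Θ u)⁻¹ * deriv (fun t => Θ t * ψ t) u
    - 7 * deriv ψ u ^ 2

noncomputable def radialRicciCoeffReg (g : ℝ → ℝ) (u : ℝ) : ℝ :=
  6 * g u * deriv (deriv g) u + g u * deriv g u - 7 * deriv g u ^ 2 - (6 / 7 + 7 * tan u) * g u ^ 2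

noncomputable def radialRicciCoeffSing (g : ℝ → ℝ) (u : ℝ) : ℝ :=
  (8 / 7 * g u - 2 / 7 * deriv g u) * g u * cos u

section

variable {g : ℝ → ℝ} {U : Set ℝ}

theorem radialRicci_mul_sin_rpow (hU : IsOpen U) (hg : ContDiffOn ℝ 2 g U)
    {u : ℝ} (hu : u ∈ U) (hs : 0 < sin u) (hc : cos u ≠ 0) :
    radialRicci (fun t => cos t ^ 7 * sin t) (fun t => g t * sin t ^ ((1 : ℝ) / 7)) u =
      radialRicciCoeffReg g u * sin u ^ ((2 : ℝ) / 7)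
        + radialRicciCoeffSing g u * sin u ^ (-(5 : ℝ) / 7)
        - 43 / 49 * (g u * cos u) ^ 2 * sin u ^ (-(12 : ℝ) / 7) := by
  set ψ : ℝ → ℝ := fun t => g t * sin t ^ ((1 : ℝ) / 7)
  set ψ' : ℝ → ℝ := fun x =>
    deriv g x * sin x ^ ((1 : ℝ) / 7) + g x * (cos x / (7 * (sin x ^ ((1 : ℝ) / 7)) ^ 6))
  have hgd : ∀ x ∈ U, HasDerivAt g (deriv g x) x := fun x hx =>
    hg.hasDerivAt_deriv_of_isOpen hU (by norm_num) hx
  have hgdd : HasDerivAt (deriv g) (deriv (deriv g) u) u :=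
    (hg.deriv_of_isOpen hU (m := 1) (by norm_num)).hasDerivAt_deriv_of_isOpen hU one_ne_zero hu
  have hψ : ∀ᶠ x in 𝓝 u, HasDerivAt ψ (ψ' x) x := by
    filter_upwards [(hU.inter (isOpen_lt continuous_const continuous_sin)).mem_nhds ⟨hu, hs⟩]
      with x hx
    exact (hgd x hx.1).mul (hasDerivAt_sin_rpow_one_div_seven hx.2)
  have hτ := hasDerivAt_sin_rpow_one_div_seven hs
  have hτ_pos : 0 < sin u ^ ((1 : ℝ) / 7) := rpow_pos_of_pos hs _
  have hψ' : HasDerivAt ψ' _ u := (hgdd.mul hτ).add ((hgd u hu).mul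
    ((hasDerivAt_cos u).div ((hτ.pow 6).const_mul 7) (by positivity)))
  have hΘψ : HasDerivAt (fun t => cos t ^ 7 * sin t * ψ t) _ u :=
    (((hasDerivAt_cos u).pow 7).mul (hasDerivAt_sin u)).mul hψ.self_of_nhds
  have hderiv : deriv ψ =ᶠ[𝓝 u] ψ' := hψ.mono fun x hx => hx.deriv
  have h2 : sin u ^ ((2 : ℝ) / 7) = (sin u ^ ((1 : ℝ) / 7)) ^ 2 := by
    simpa using rpow_intCast_div hs.le 2 7
  have h5 : sin u ^ (-(5 : ℝ) / 7) = ((sin u ^ ((1 : ℝ) / 7)) ^ 5)⁻¹ := by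
    simpa using rpow_intCast_div hs.le (-5) 7
  have h12 : sin u ^ (-(12 : ℝ) / 7) = ((sin u ^ ((1 : ℝ) / 7)) ^ 12)⁻¹ := by
    simpa using rpow_intCast_div hs.le (-12) 7
  have h7 : (sin u ^ ((1 : ℝ) / 7)) ^ 7 = sin u := by
    simpa using (rpow_intCast_div hs.le 7 7).symm
  unfold radialRicci radialRicciCoeffReg radialRicciCoeffSing
  beta_reduce
  rw [hderiv.deriv_eq, hψ'.deriv, hΘψ.deriv, hψ.self_of_nhds.deriv, tan_eq_sin_div_cos,
    h2, h5, h12]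
  simp only [ψ, ψ', Pi.pow_apply, Pi.mul_apply]
  generalize sin u ^ ((1 : ℝ) / 7) = t at *
  rw [← h7]
  push_cast
  field_simp
  ring

theorem continuousAt_radialRicciCoeffReg (hU : IsOpen U) (hg : ContDiffOn ℝ 2 g U) {x : ℝ}
    (hx : x ∈ U) (hc : cos x ≠ 0) : ContinuousAt (radialRicciCoeffReg g) x := by
  have hg' : ContDiffOn ℝ 1 (deriv g) U := hg.deriv_of_isOpen hU (by norm_num)
  have := hg.continuousOn.continuousAt (hU.mem_nhds hx)
  have := hg'.continuousOn.continuousAt (hU.mem_nhds hx)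
  have := (hg'.continuousOn_deriv_of_isOpen hU le_rfl).continuousAt (hU.mem_nhds hx)
  have := continuousAt_tan.2 hc
  unfold radialRicciCoeffReg
  fun_prop

theorem continuousAt_radialRicciCoeffSing (hU : IsOpen U) (hg : ContDiffOn ℝ 1 g U) {x : ℝ}
    (hx : x ∈ U) : ContinuousAt (radialRicciCoeffSing g) x := by
  have := hg.continuousOn.continuousAt (hU.mem_nhds hx)
  have := (hg.continuousOn_deriv_of_isOpen hU le_rfl).continuousAt (hU.mem_nhds hx)
  unfold radialRicciCoeffSing
  fun_prop

theorem isBigO_radialRicci_mul_sin_rpow_add (hU : IsOpen U)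
    (h0 : (0 : ℝ) ∈ U) (hg : ContDiffOn ℝ 2 g U) :
    (fun u => radialRicci (fun t => cos t ^ 7 * sin t) (fun t => g t * sin t ^ ((1 : ℝ) / 7)) u
        + 43 / 49 * g 0 ^ 2 * u ^ (-(12 : ℝ) / 7)) =O[𝓝[>] 0] fun u => u ^ (-(5 : ℝ) / 7) := by
  have hU0 : U ∈ 𝓝 (0 : ℝ) := hU.mem_nhds h0
  set k : ℝ → ℝ := fun u => (g u * cos u) ^ 2
  have hdecomp : ∀ᶠ u in 𝓝[>] 0,
      radialRicciCoeffReg g u * (sinc u ^ ((2 : ℝ) / 7) * u ^ ((2 : ℝ) / 7))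
        + radialRicciCoeffSing g u * (sinc u ^ (-(5 : ℝ) / 7) * u ^ (-(5 : ℝ) / 7))
        - 43 / 49 * ((k u * sinc u ^ (-(12 : ℝ) / 7) - k 0) * u ^ (-(12 : ℝ) / 7)) =
      radialRicci (fun t => cos t ^ 7 * sin t) (fun t => g t * sin t ^ ((1 : ℝ) / 7)) u
        + 43 / 49 * g 0 ^ 2 * u ^ (-(12 : ℝ) / 7) := by
    filter_upwards [inter_mem (mem_nhdsWithin_of_mem_nhds hU0) (Ioo_mem_nhdsGT pi_div_two_pos)]
      with u ⟨hu, hu0, hu1⟩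
    have hs : 0 < sin u := sin_pos_of_pos_of_lt_pi hu0 (by linarith [pi_pos])
    have hc : 0 < cos u := cos_pos_of_mem_Ioo ⟨by linarith, hu1⟩
    rw [radialRicci_mul_sin_rpow hU hg hu hs hc.ne', sin_rpow_eq_sinc_rpow_mul_rpow hu0 hs.le,
      sin_rpow_eq_sinc_rpow_mul_rpow hu0 hs.le, sin_rpow_eq_sinc_rpow_mul_rpow hu0 hs.le]
    simp only [k, cos_zero]
    ring
  have hreg := isBigO_mul_sinc_rpow_mul_rpow_nhdsGT_zero
    (continuousAt_radialRicciCoeffReg hU hg h0 (by simp)) ((2 : ℝ) / 7)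
    (show -(5 : ℝ) / 7 ≤ 2 / 7 by norm_num)
  have hsing := isBigO_mul_sinc_rpow_mul_rpow_nhdsGT_zero
    (continuousAt_radialRicciCoeffSing hU (hg.of_le (by norm_num)) h0) (-(5 : ℝ) / 7)
    (le_refl (-(5 : ℝ) / 7))
  have hlead : (fun u => (k u * sinc u ^ (-(12 : ℝ) / 7) - k 0) * u ^ (-(12 : ℝ) / 7))
      =O[𝓝[>] 0] fun u => u ^ (-(5 : ℝ) / 7) := by
    have hk : DifferentiableAt ℝ k 0 :=
      ((hg.hasDerivAt_deriv_of_isOpen hU (by norm_num) h0).differentiableAt.mul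
        differentiableAt_cos).pow 2
    refine ((hk.isBigO_mul_sinc_rpow_sub _).mul (isBigO_refl _ _)).congr'
      (Eventually.of_forall fun _ => rfl) ?_
    filter_upwards [self_mem_nhdsWithin] with u hu
    rw [← rpow_one_add' (le_of_lt hu) (by norm_num)]
    norm_num
  exact ((hreg.add hsing).sub (hlead.const_mul_left _)).congr' hdecomp
    (Eventually.of_forall fun _ => rfl)

end

/-- For `m = 8`: with `ψ(u) = (sin(π/2−u)/(π/2−u)) · cos(π/2−u)^{1/7}`,
`Θ(u) = sin(π/2−u)^7 cos(π/2−u)` and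
`F(u) = 6 ψψ'' + ψΘ⁻¹(Θψ)' − 7 (ψ')²`, one has
`F(u) = −(172/(49 π²)) u^{−12/7} + O(u^{−5/7})` as `u → 0⁺`. -/
theorem stmt13 (ψ Θ F : ℝ → ℝ)
    (hψ : ∀ u, ψ u = (Real.sin (π / 2 - u) / (π / 2 - u)) *
        Real.cos (π / 2 - u) ^ ((1 : ℝ) / 7))
    (hΘ : ∀ u, Θ u = Real.sin (π / 2 - u) ^ 7 * Real.cos (π / 2 - u))
    (hF : ∀ u, F u = 6 * ψ u * deriv (deriv ψ) u
        + ψ u * (Θ u)⁻¹ * deriv (fun t => Θ t * ψ t) u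
        - 7 * (deriv ψ u) ^ 2) :
    (fun u => F u + (172 / (49 * π ^ 2)) * u ^ (-(12 : ℝ) / 7)) =O[𝓝[>] (0 : ℝ)]
      fun u => u ^ (-(5 : ℝ) / 7) := by
  set g : ℝ → ℝ := fun u => cos u / (π / 2 - u)
  have hψg : ψ = fun t => g t * sin t ^ ((1 : ℝ) / 7) := funext fun t => by
    rw [hψ, sin_pi_div_two_sub, cos_pi_div_two_sub]
  have hΘ' : Θ = fun t => cos t ^ 7 * sin t := funext fun t => by
    rw [hΘ, sin_pi_div_two_sub, cos_pi_div_two_sub]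
  have hg : ContDiffOn ℝ 2 g (Iio (π / 2)) :=
    contDiff_cos.contDiffOn.div (contDiffOn_const.sub contDiffOn_id) fun x hx =>
      (sub_pos.2 hx).ne'
  have hg0 : 43 / 49 * g 0 ^ 2 = 172 / (49 * π ^ 2) := by
    simp only [g, cos_zero, sub_zero]
    field_simp
    ring
  obtain rfl : F = radialRicci Θ ψ := funext hF
  subst hψg hΘ'
  rw [← hg0]
  exact isBigO_radialRicci_mul_sin_rpow_add isOpen_Iio pi_div_two_pos hg
end
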